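/- Let w : 𝕋 → ℂ be C¹, m = m(w), and u = e^{iJ(w)} w with (d/dx)J(w) = |w|² − m. Let N(u) = (3/2)Im∫ u²\bar{u}\bar{u_x} dx + (1/2)∫|u|⁶ dx. Then N(u) = (3/2)Im∫ w²\bar{w}\bar{w_x} dx − ∫|w|⁶ dx + (3m/2)∫|w|⁴ dx, where integrals are over [0,2π]. -/

import Mathlib

/-!
The gauge factor `e = exp (i J)` has modulus one, so `|u| = |w|` and `u_x = e (i J' w + w_x)`.
Hence `u² ū ū_x = w² w̄ w̄_x - i J' |w|⁴` pointwise, and with `J' = |w|² - m` the cubic term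
loses `∫ (|w|⁶ - m |w|⁴)`, which combines with `(1/2) ∫ |u|⁶ = (1/2) ∫ |w|⁶`.
-/

open MeasureTheory

/-- The mass `m(w) = (1/2π) ∫₀^{2π} |w|² dx`. -/
noncomputable def mass (w : ℝ → ℂ) : ℝ :=
  (1 / (2 * Real.pi)) * ∫ y in (0:ℝ)..(2 * Real.pi), ‖w y‖ ^ 2

open Complex ComplexConjugate

lemma HasDerivAt.cexp_I_mul_ofReal_mul {J : ℝ → ℝ} {w : ℝ → ℂ} {j : ℝ} {w' : ℂ} {x : ℝ}
    (hJ : HasDerivAt J j x) (hw : HasDerivAt w w' x) :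
    HasDerivAt (fun y => cexp (I * (J y : ℂ)) * w y)
      (cexp (I * (J x : ℂ)) * (I * (j : ℂ) * w x + w')) x :=
  ((hJ.ofReal_comp.const_mul I).cexp.mul hw).congr_deriv (by ring)

lemma im_gauge_cubic {e : ℂ} (he : ‖e‖ = 1) (z z' : ℂ) (c : ℝ) :
    ((e * z) ^ 2 * conj (e * z) * conj (e * (I * (c : ℂ) * z + z'))).im
      = (z ^ 2 * conj z * conj z').im - c * ‖z‖ ^ 4 := by
  have hee : e * conj e = 1 := by rw [mul_conj', he]; simp
  have hzz : z * conj z = (‖z‖ : ℂ) ^ 2 := mul_conj' z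
  have key : (e * z) ^ 2 * conj (e * z) * conj (e * (I * c * z + z'))
      = z ^ 2 * conj z * conj z' - I * ((c * ‖z‖ ^ 4 : ℝ) : ℂ) := by
    simp only [map_mul, map_add, conj_I, conj_ofReal]
    push_cast
    linear_combination (e * conj e + 1) * z ^ 2 * conj z * (conj z' - I * c * conj z) * hee
      - I * c * (z * conj z + (‖z‖ : ℂ) ^ 2) * hzz
  rw [key, sub_im, I_mul_im, ofReal_re]

theorem stmt10_general (w w' : ℝ → ℂ) (hw : ∀ x, HasDerivAt w (w' x) x)
    (hw' : Continuous w')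
    (m : ℝ)
    (J : ℝ → ℝ) (hJ : ∀ x, HasDerivAt J (‖w x‖ ^ 2 - m) x)
    (u : ℝ → ℂ) (hu : ∀ x, u x = Complex.exp (Complex.I * (J x : ℂ)) * w x) :
    (3 / 2) * (∫ x in (0:ℝ)..(2 * Real.pi),
        ((u x) ^ 2 * (starRingEnd ℂ) (u x) * (starRingEnd ℂ) (deriv u x)).im)
      + (1 / 2) * (∫ x in (0:ℝ)..(2 * Real.pi), ‖u x‖ ^ 6)
    = (3 / 2) * (∫ x in (0:ℝ)..(2 * Real.pi),
        ((w x) ^ 2 * (starRingEnd ℂ) (w x) * (starRingEnd ℂ) (w' x)).im)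
      - (∫ x in (0:ℝ)..(2 * Real.pi), ‖w x‖ ^ 6)
      + (3 * m / 2) * (∫ x in (0:ℝ)..(2 * Real.pi), ‖w x‖ ^ 4) := by
  obtain rfl : u = fun x => exp (I * J x) * w x := funext hu
  have hwc : Continuous w := continuous_iff_continuousAt.2 fun x => (hw x).continuousAt
  have hnorm : ∀ x, ‖exp (I * J x) * w x‖ = ‖w x‖ := fun x => by
    rw [norm_mul, norm_exp_I_mul_ofReal, one_mul]
  have hcubic : ∀ x, ((exp (I * J x) * w x) ^ 2 * conj (exp (I * J x) * w x)
      * conj (deriv (fun y => exp (I * J y) * w y) x)).im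
      = (w x ^ 2 * conj (w x) * conj (w' x)).im - ‖w x‖ ^ 6 + m * ‖w x‖ ^ 4 := fun x => by
    rw [((hJ x).cexp_I_mul_ofReal_mul (hw x)).deriv, im_gauge_cubic (norm_exp_I_mul_ofReal _)]
    ring
  have hf : Continuous fun x => (w x ^ 2 * conj (w x) * conj (w' x)).im := by fun_prop
  have h6 : IntervalIntegrable (fun x => ‖w x‖ ^ 6) volume 0 (2 * Real.pi) :=
    (by fun_prop : Continuous fun x => ‖w x‖ ^ 6).intervalIntegrable _ _
  have h4 : IntervalIntegrable (fun x => m * ‖w x‖ ^ 4) volume 0 (2 * Real.pi) :=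
    (by fun_prop : Continuous fun x => m * ‖w x‖ ^ 4).intervalIntegrable _ _
  beta_reduce
  simp only [hcubic, hnorm]
  rw [intervalIntegral.integral_add ((hf.intervalIntegrable _ _).sub h6) h4,
    intervalIntegral.integral_sub (hf.intervalIntegrable _ _) h6,
    intervalIntegral.integral_const_mul]
  ring

/-- Transformation under the gauge of the non-quadratic part of the energy
`N(u) = (3/2) Im ∫ u² ū ū_x + (1/2) ∫ |u|⁶`:
`N(u) = (3/2) Im ∫ w² w̄ w̄_x − ∫ |w|⁶ + (3m/2) ∫ |w|⁴`. -/
theorem stmt10 (w w' : ℝ → ℂ) (hw : ∀ x, HasDerivAt w (w' x) x)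
    (hw' : Continuous w') (hper : Function.Periodic w (2 * Real.pi))
    (m : ℝ) (hm : m = mass w)
    (J : ℝ → ℝ) (hJ : ∀ x, HasDerivAt J (‖w x‖ ^ 2 - m) x)
    (u : ℝ → ℂ) (hu : ∀ x, u x = Complex.exp (Complex.I * (J x : ℂ)) * w x) :
    (3 / 2) * (∫ x in (0:ℝ)..(2 * Real.pi),
        ((u x) ^ 2 * (starRingEnd ℂ) (u x) * (starRingEnd ℂ) (deriv u x)).im)
      + (1 / 2) * (∫ x in (0:ℝ)..(2 * Real.pi), ‖u x‖ ^ 6)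
    = (3 / 2) * (∫ x in (0:ℝ)..(2 * Real.pi),
        ((w x) ^ 2 * (starRingEnd ℂ) (w x) * (starRingEnd ℂ) (w' x)).im)
      - (∫ x in (0:ℝ)..(2 * Real.pi), ‖w x‖ ^ 6)
      + (3 * m / 2) * (∫ x in (0:ℝ)..(2 * Real.pi), ‖w x‖ ^ 4) :=
  stmt10_general w w' hw hw' m J hJ u hu
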